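/- (Crossing-change isomorphism.) The maps c+ : C(D−) → C(D+) defined by c+(c1, c0) = (I10 c1 + (x0 − x1 − x2 + x3)·c0, I01 c0) and c− : C(D+) → C(D−) defined by c−(c0, c1) = (I01 c0 − (x0 − x1 − x2 + x3)·c1, I10 c1) are chain maps (c+∘D− = D+∘c+ and c−∘D+ = D−∘c−) and are mutually inverse isomorphisms: c+∘c− = id and c−∘c+ = id. -/

import Mathlib

noncomputable section

/-- The base ring `R = ℤ[x0, x1, x2, x3]`. -/
abbrev RR : Type := MvPolynomial (Fin 4) ℤ

def x0 : RR := MvPolynomial.X 0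
def x1 : RR := MvPolynomial.X 1
def x2 : RR := MvPolynomial.X 2
def x3 : RR := MvPolynomial.X 3

/-- `θ = x1 − x2 + x3 − x0`. -/
def th : RR := x1 - x2 + x3 - x0

/-- The potential `w = (x0 − x2)·(x1 − x3)·θ`. -/
def ww : RR := (x0 - x2) * (x1 - x3) * th

/-- The `R`-linear map on `R × R` sending `(x, y) ↦ (p·y, q·x)`; with respect to the
basis `u = (1,0)`, `v = (0,1)` it sends `u ↦ q·v` and `v ↦ p·u`. -/
def od (p q : RR) : (RR × RR) →ₗ[RR] (RR × RR) :=
  LinearMap.prod (p • LinearMap.snd RR RR RR) (q • LinearMap.fst RR RR RR)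

/-- The differential of `C(D0)`: `d0 u0 = (x0 − x2)·v0`, `d0 v0 = (x1 − x3)·θ·u0`. -/
def d0 : (RR × RR) →ₗ[RR] (RR × RR) := od ((x1 - x3) * th) (x0 - x2)

/-- The differential of `C(D1)`: `d1 u1 = (x1 − x3)·v1`, `d1 v1 = (x0 − x2)·θ·u1`. -/
def d1 : (RR × RR) →ₗ[RR] (RR × RR) := od ((x0 - x2) * th) (x1 - x3)

/-- The saddle map `s01 : C(D0) → C(D1)`: `s01 u0 = −v1`, `s01 v0 = θ·u1`. -/
def s01 : (RR × RR) →ₗ[RR] (RR × RR) := od th (-1)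

/-- The saddle map `s10 : C(D1) → C(D0)`: `s10 u1 = −v0`, `s10 v1 = θ·u0`. -/
def s10 : (RR × RR) →ₗ[RR] (RR × RR) := od th (-1)

/-- The map `I01 : C(D0) → C(D1)`: `I01 u0 = u1`, `I01 v0 = v1`. -/
def I01 : (RR × RR) →ₗ[RR] (RR × RR) := LinearMap.id

/-- The map `I10 : C(D1) → C(D0)`: `I10 u1 = u0`, `I10 v1 = v0`. -/
def I10 : (RR × RR) →ₗ[RR] (RR × RR) := LinearMap.id

/-- The first/second projections of `C0 × C1` (or `C1 × C0`). -/
def pr1 : ((RR × RR) × (RR × RR)) →ₗ[RR] (RR × RR) := LinearMap.fst RR (RR × RR) (RR × RR)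
def pr2 : ((RR × RR) × (RR × RR)) →ₗ[RR] (RR × RR) := LinearMap.snd RR (RR × RR) (RR × RR)

/-- The differential of `C(D+) = C0 × C1`: `D+ (c0, c1) = (d0 c0, −s01 c0 + d1 c1)`. -/
def Dplus : ((RR × RR) × (RR × RR)) →ₗ[RR] ((RR × RR) × (RR × RR)) :=
  LinearMap.prod (d0 ∘ₗ pr1) (-(s01 ∘ₗ pr1) + d1 ∘ₗ pr2)

/-- The differential of `C(D−) = C1 × C0`: `D− (c1, c0) = (d1 c1, −s10 c1 + d0 c0)`. -/
def Dminus : ((RR × RR) × (RR × RR)) →ₗ[RR] ((RR × RR) × (RR × RR)) :=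
  LinearMap.prod (d1 ∘ₗ pr1) (-(s10 ∘ₗ pr1) + d0 ∘ₗ pr2)

/-- The crossing-change map `c+ : C(D−) → C(D+)`,
`c+ (c1, c0) = (I10 c1 + (x0 − x1 − x2 + x3)·c0, I01 c0)`. -/
def cplus : ((RR × RR) × (RR × RR)) →ₗ[RR] ((RR × RR) × (RR × RR)) :=
  LinearMap.prod (I10 ∘ₗ pr1 + (x0 - x1 - x2 + x3) • pr2) (I01 ∘ₗ pr2)

/-- The crossing-change map `c− : C(D+) → C(D−)`,
`c− (c0, c1) = (I01 c0 − (x0 − x1 − x2 + x3)·c1, I10 c1)`. -/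
def cminus : ((RR × RR) × (RR × RR)) →ₗ[RR] ((RR × RR) × (RR × RR)) :=
  LinearMap.prod (I01 ∘ₗ pr1 - (x0 - x1 - x2 + x3) • pr2) (I10 ∘ₗ pr2)

/-!
With `c = x0 − x1 − x2 + x3`, the maps `c+` and `c−` are the unitriangular shears
`(m₁, m₂) ↦ (m₁ ± c m₂, m₂)`, hence mutually inverse. Since `s01 = s10 =: s`, both `D±` are
lower triangular with the same off-diagonal entry `-s`, and a shear by `c` intertwines two such
differentials when their diagonal entries differ by `c • s`; here `d0 + c • s = d1`.
-/

section Triangular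

variable {R M : Type*} [CommRing R] [AddCommGroup M] [Module R M]

def shear (c : R) : (M × M) →ₗ[R] (M × M) :=
  (LinearMap.fst R M M + c • LinearMap.snd R M M).prod (LinearMap.snd R M M)

def coneDifferential (d₀ d₁ s : M →ₗ[R] M) : (M × M) →ₗ[R] (M × M) :=
  (d₀ ∘ₗ LinearMap.fst R M M).prod (-(s ∘ₗ LinearMap.fst R M M) + d₁ ∘ₗ LinearMap.snd R M M)

@[simp]
theorem shear_apply (c : R) (m : M × M) : shear c m = (m.1 + c • m.2, m.2) := rfl

@[simp]
theorem coneDifferential_apply (d₀ d₁ s : M →ₗ[R] M) (m : M × M) :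
    coneDifferential d₀ d₁ s m = (d₀ m.1, -s m.1 + d₁ m.2) := rfl

theorem shear_comp_shear (a b : R) : shear a ∘ₗ shear b = (shear (a + b) : (M × M) →ₗ[R] _) := by
  ext m <;> simp [add_smul, add_comm]

theorem shear_zero : (shear 0 : (M × M) →ₗ[R] _) = LinearMap.id := by
  ext m <;> simp

theorem shear_comp_coneDifferential {d₀ d₁ s : M →ₗ[R] M} {c : R} (h : d₀ + c • s = d₁) :
    shear c ∘ₗ coneDifferential d₁ d₀ s = coneDifferential d₀ d₁ s ∘ₗ shear c := by
  subst h
  ext m <;> simp [add_assoc, add_left_comm]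

end Triangular

theorem od_add (p q p' q' : RR) : od p q + od p' q' = od (p + p') (q + q') := by
  ext m <;> simp [od]

theorem smul_od (r p q : RR) : r • od p q = od (r * p) (r * q) := by
  ext m <;> simp [od]

theorem d0_add_smul_s01 : d0 + (x0 - x1 - x2 + x3) • s01 = d1 := by
  rw [d0, d1, s01, smul_od, od_add, th]
  congr 1 <;> ring

theorem Dplus_eq_coneDifferential : Dplus = coneDifferential d0 d1 s01 := rfl

theorem Dminus_eq_coneDifferential : Dminus = coneDifferential d1 d0 s01 := rfl

theorem cplus_eq_shear : cplus = shear (x0 - x1 - x2 + x3) := rfl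

theorem cminus_eq_shear : cminus = shear (-(x0 - x1 - x2 + x3)) := by
  ext m <;> simp [cminus, I01, I10, pr1, pr2, sub_eq_add_neg]

/-- Crossing-change isomorphism. The maps `c+` and `c−` are chain
maps and mutually inverse isomorphisms. -/
theorem stmt_7 :
    cplus ∘ₗ Dminus = Dplus ∘ₗ cplus ∧
    cminus ∘ₗ Dplus = Dminus ∘ₗ cminus ∧
    cplus ∘ₗ cminus = LinearMap.id ∧
    cminus ∘ₗ cplus = LinearMap.id := by
  rw [Dplus_eq_coneDifferential, Dminus_eq_coneDifferential, cplus_eq_shear, cminus_eq_shear]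
  have h_d1_add : d1 + -(x0 - x1 - x2 + x3) • s01 = d0 := by
    rw [← d0_add_smul_s01, add_assoc, ← add_smul, add_neg_cancel, zero_smul, add_zero]
  refine ⟨shear_comp_coneDifferential d0_add_smul_s01, shear_comp_coneDifferential h_d1_add, ?_, ?_⟩
  · rw [shear_comp_shear, add_neg_cancel, shear_zero]
  · rw [shear_comp_shear, neg_add_cancel, shear_zero]

end
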